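/- Let f be holomorphic on D_R, let a ∈ D_R with d_a = R - |a| = dist(a, ∂D_R), and let f(z) = Σ_{k≥0} c_k(a)(z-a)^k be its expansion at a. Suppose Re f > 0 on D_R. Then for every z with |z - a| = r < d_a, Σ_{k=1}^∞ |c_k(a)(z-a)^k| ≤ (2Rr) / ((2R - d_a)(d_a - r)) · Re f(a). -/

import Mathlib

/-!
Fix `‖a‖ < ρ < R`. Cauchy's formula on the circle `‖z‖ = ρ` writes `c_n(a)` as the average of
`z f(z) / (z - a)^(n+1)`. For `n ≥ 1` the same average with `conj f` in place of `f` vanishes: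
on the circle `conj z = ρ² / z`, so its conjugate is the average of a function holomorphic on
the disc and vanishing at `0`. Hence `c_n(a)` is the average of `2 Re f(z) · z / (z - a)^(n+1)`.
This kernel is at most `ρ / ((ρ + ‖a‖)(ρ - ‖a‖)^n)` times the Poisson kernel of `a`, whose
average against `Re f ≥ 0` is `Re f(a)`. Letting `ρ → R` bounds `‖c_n(a)‖` by
`2R Re f(a) / ((R + ‖a‖) d_a^n)`, and the claim is the sum of a geometric series.
-/

open Complex ComplexConjugate Function Metric Real

namespace Real

theorem circleAverage_smul_const {E : Type*} [NormedAddCommGroup E] [NormedSpace ℂ E]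
    [CompleteSpace E] (g : ℂ → ℂ) (v : E) (c : ℂ) (R : ℝ) :
    circleAverage (fun z ↦ g z • v) c R = circleAverage g c R • v := by
  simp only [circleAverage_def, intervalIntegral.integral_smul_const, smul_assoc]

theorem circleAverage_conj (f : ℂ → ℂ) (c : ℂ) (R : ℝ) :
    circleAverage (fun z ↦ conj (f z)) c R = conj (circleAverage f c R) := by
  simp only [circleAverage_def, intervalIntegral, integral_conj, map_sub, Complex.real_smul,
    map_mul, conj_ofReal]

theorem norm_circleAverage_le {E : Type*} [NormedAddCommGroup E] [NormedSpace ℝ E]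
    (f : ℂ → E) (c : ℂ) (R : ℝ) :
    ‖circleAverage f c R‖ ≤ circleAverage (fun z ↦ ‖f z‖) c R := by
  rw [circleAverage_def, circleAverage_def, norm_smul, smul_eq_mul,
    Real.norm_of_nonneg (by positivity)]
  gcongr
  exact intervalIntegral.norm_integral_le_integral_norm Real.two_pi_pos.le

theorem circleAverage_sub_div_sub_pow_eq_zero (c a : ℂ) (R : ℝ) (n : ℕ) :
    circleAverage (fun z ↦ (z - c) / (z - a) ^ (n + 2)) c R = 0 := by
  wlog hR : 0 < R generalizing R
  · rcases (not_lt.mp hR).lt_or_eq with hR | rfl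
    · rw [← circleAverage_neg_radius]; exact this _ (neg_pos.mpr hR)
    · simp
  rw [circleAverage_eq_circleIntegral hR.ne',
    circleIntegral.integral_congr (g := fun z ↦ (z - a) ^ (-(n + 2 : ℤ))) hR.le,
    circleIntegral.integral_sub_zpow_of_ne (by omega), smul_zero]
  intro z hz
  have hz0 : z - c ≠ 0 := sub_ne_zero.2 (ne_of_mem_sphere hz hR.ne')
  dsimp only
  rw [smul_eq_mul, div_eq_mul_inv, inv_mul_cancel_left₀ hz0, zpow_neg, ← zpow_natCast]
  norm_cast

end Real

theorem DiffContOnCl.continuousOn_sphere {E : Type*} [NormedAddCommGroup E] [NormedSpace ℂ E]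
    {f : ℂ → E} {c : ℂ} {R : ℝ} (hf : DiffContOnCl ℂ f (ball c R)) (hR : 0 < R) :
    ContinuousOn f (sphere c |R|) :=
  hf.continuousOn.mono <| by
    rw [abs_of_pos hR, closure_ball c hR.ne']; exact sphere_subset_closedBall

theorem continuousOn_sub_div_sub_pow_sphere {c a : ℂ} {R : ℝ} (ha : a ∈ ball c R) (m : ℕ) :
    ContinuousOn (fun z ↦ (z - c) / (z - a) ^ m) (sphere c |R|) :=
  ContinuousOn.div (by fun_prop) (by fun_prop) fun z hz ↦ pow_ne_zero _ <| sub_ne_zero.2 <|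
    sphere_disjoint_ball.ne_of_mem (abs_of_pos (pos_of_mem_ball ha) ▸ hz) ha

theorem AnalyticAt.iterate_dslope_apply_self {𝕜 E : Type*} [NontriviallyNormedField 𝕜]
    [CharZero 𝕜] [NormedAddCommGroup E] [NormedSpace 𝕜 E] [CompleteSpace E] {f : 𝕜 → E} {a : 𝕜}
    (hf : AnalyticAt 𝕜 f a) (n : ℕ) :
    (swap dslope a)^[n] f a = (n.factorial : 𝕜)⁻¹ • iteratedDeriv n f a := by
  obtain ⟨p, r, hp⟩ := hf
  rw [← (hp.hasFPowerSeriesAt.has_fpower_series_iterate_dslope_fslope n).coeff_zero 1,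
    iteratedDeriv_eq_iteratedFDeriv, ← hp.factorial_smul 1 n, ← Nat.cast_smul_eq_nsmul 𝕜,
    inv_smul_smul₀ (by exact_mod_cast n.factorial_ne_zero)]
  exact (p.coeff_iterate_fslope n 0).trans (by rw [zero_add]; rfl)

section CauchyFormula

variable {E : Type*} [NormedAddCommGroup E] [NormedSpace ℂ E] [CompleteSpace E]

theorem DiffContOnCl.dslope {f : ℂ → E} {U : Set ℂ} {a : ℂ} (hf : DiffContOnCl ℂ f U)
    (hU : IsOpen U) (ha : a ∈ U) : DiffContOnCl ℂ (dslope f a) U := by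
  have hfa : AnalyticAt ℂ f a := hf.differentiableOn.analyticAt (hU.mem_nhds ha)
  refine ⟨fun x hx ↦ ?_, fun x hx ↦ ?_⟩
  · rcases eq_or_ne x a with rfl | hxa
    · obtain ⟨p, hp⟩ := hfa
      exact hp.has_fpower_series_dslope_fslope.differentiableAt.differentiableWithinAt
    · exact ((differentiableAt_dslope_of_ne hxa).2
        (hf.differentiableAt hU hx)).differentiableWithinAt
  · rcases eq_or_ne x a with rfl | hxa
    · exact (continuousAt_dslope_same.2 hfa.differentiableAt).continuousWithinAt
    · exact (continuousWithinAt_dslope_of_ne hxa).2 (hf.continuousOn x hx)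

theorem DiffContOnCl.circleAverage_sub_div_sub_pow_smul_eq_iterate_dslope {f : ℂ → E} {c a : ℂ}
    {R : ℝ} (hf : DiffContOnCl ℂ f (ball c R)) (ha : a ∈ ball c R) (n : ℕ) :
    Real.circleAverage (fun z ↦ ((z - c) / (z - a) ^ (n + 1)) • f z) c R =
      (swap _root_.dslope a)^[n] f a := by
  have hR : 0 < R := pos_of_mem_ball ha
  have hza : ∀ z ∈ sphere c |R|, z - a ≠ 0 := fun z hz ↦
    sub_ne_zero.2 (sphere_disjoint_ball.ne_of_mem (abs_of_pos hR ▸ hz) ha)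
  induction n generalizing f with
  | zero =>
    simpa using (abs_of_pos hR ▸ hf).circleAverage_smul_div (by rwa [abs_of_pos hR])
  | succ n ih =>
    have hsplit : Set.EqOn (fun z ↦ ((z - c) / (z - a) ^ (n + 2)) • f z)
        (fun z ↦ ((z - c) / (z - a) ^ (n + 1)) • _root_.dslope f a z +
          ((z - c) / (z - a) ^ (n + 2)) • f a) (sphere c |R|) := fun z hz ↦ by
      simp only [dslope_of_ne _ (sub_ne_zero.1 (hza z hz)), slope_def_module, smul_smul, smul_sub]
      match_scalars <;> field_simp [hza z hz] <;> ring
    rw [circleAverage_congr_sphere hsplit, circleAverage_fun_add, ih (hf.dslope isOpen_ball ha),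
      circleAverage_smul_const, circleAverage_sub_div_sub_pow_eq_zero, zero_smul, add_zero,
      iterate_succ_apply]
    · exact ((continuousOn_sub_div_sub_pow_sphere ha _).smul
        ((hf.dslope isOpen_ball ha).continuousOn_sphere hR)).circleIntegrable'
    · exact ((continuousOn_sub_div_sub_pow_sphere ha _).smul continuousOn_const).circleIntegrable'

theorem DiffContOnCl.circleAverage_sub_div_sub_pow_smul {f : ℂ → E} {c a : ℂ} {R : ℝ}
    (hf : DiffContOnCl ℂ f (ball c R)) (ha : a ∈ ball c R) (n : ℕ) :
    Real.circleAverage (fun z ↦ ((z - c) / (z - a) ^ (n + 1)) • f z) c R =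
      (n.factorial : ℂ)⁻¹ • iteratedDeriv n f a := by
  rw [hf.circleAverage_sub_div_sub_pow_smul_eq_iterate_dslope ha,
    (hf.differentiableOn.analyticAt (isOpen_ball.mem_nhds ha)).iterate_dslope_apply_self]

end CauchyFormula

theorem norm_div_sub_pow_le_mul_poissonKernel {a z : ℂ} {R : ℝ} (hz : z ∈ sphere 0 R)
    (ha : a ∈ ball 0 R) (n : ℕ) :
    ‖z / (z - a) ^ (n + 2)‖ ≤ R / ((R ^ 2 - ‖a‖ ^ 2) * (R - ‖a‖) ^ n) * poissonKernel 0 a z := by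
  have hzR : ‖z‖ = R := mem_sphere_zero_iff_norm.1 hz
  have haR : ‖a‖ < R := mem_ball_zero_iff.1 ha
  have hdist : R - ‖a‖ ≤ ‖z - a‖ := hzR ▸ norm_sub_norm_le z a
  have hδ : 0 < R - ‖a‖ := sub_pos.2 haR
  have hza : 0 < ‖z - a‖ := hδ.trans_le hdist
  have hR2 : R ^ 2 - ‖a‖ ^ 2 ≠ 0 := by nlinarith [norm_nonneg a]
  rw [poissonKernel_def, sub_zero, sub_zero, hzR, norm_div, norm_pow, hzR]
  calc R / ‖z - a‖ ^ (n + 2) = R / (‖z - a‖ ^ n * ‖z - a‖ ^ 2) := by ring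
    _ ≤ R / ((R - ‖a‖) ^ n * ‖z - a‖ ^ 2) := by gcongr; exact hzR ▸ norm_nonneg z
    _ = _ := by field_simp

theorem continuousOn_poissonKernel_sphere {c a : ℂ} {R : ℝ} (ha : a ∈ ball c R) :
    ContinuousOn (poissonKernel c a) (sphere c |R|) := by
  rw [poissonKernel_eq_re_herglotzRieszKernel]
  exact continuous_re.comp_continuousOn (continuousOn_herglotzRieszKernel_sphere ha)

namespace DiffContOnCl

variable {f : ℂ → ℂ} {a : ℂ} {R : ℝ}

theorem circleAverage_poissonKernel_mul_re {c : ℂ} (hf : DiffContOnCl ℂ f (ball c R))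
    (ha : a ∈ ball c R) :
    Real.circleAverage (fun z ↦ poissonKernel c a z * (f z).re) c R = (f a).re := by
  have hint : CircleIntegrable (poissonKernel c a • f) c R :=
    ((continuousOn_poissonKernel_sphere ha).smul
      (hf.continuousOn_sphere (pos_of_mem_ball ha))).circleIntegrable'
  rw [← hf.circleAverage_poissonKernel_smul ha, ← reCLM_apply, ← reCLM.circleAverage_comp_comm hint]
  simp [Function.comp_def]

theorem circleAverage_div_sub_pow_mul_conj_eq_zero (hf : DiffContOnCl ℂ f (ball 0 R))
    (ha : a ∈ ball 0 R) (n : ℕ) :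
    Real.circleAverage (fun z ↦ z / (z - a) ^ (n + 2) * conj (f z)) 0 R = 0 := by
  have hR : 0 < R := pos_of_mem_ball ha
  have ha' : ‖a‖ < R := mem_ball_zero_iff.1 ha
  have hden : ∀ z ∈ closure (ball (0 : ℂ) R), (R : ℂ) ^ 2 - conj a * z ≠ 0 := fun z hz h ↦ by
    rw [closure_ball 0 hR.ne', mem_closedBall_zero_iff] at hz
    have := congrArg norm (sub_eq_zero.1 h)
    rw [norm_mul, RCLike.norm_conj, norm_pow, norm_real, Real.norm_of_nonneg hR.le] at this
    nlinarith [norm_nonneg a, norm_nonneg z]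
  have hreflect : Set.EqOn (fun z ↦ conj (z / (z - a) ^ (n + 2) * conj (f z)))
      (fun z ↦ (R : ℂ) ^ 2 * z ^ (n + 1) / ((R : ℂ) ^ 2 - conj a * z) ^ (n + 2) * f z)
      (sphere 0 |R|) := fun z hz ↦ by
    rw [abs_of_pos hR] at hz
    have hz0 : z ≠ 0 := ne_of_mem_sphere hz hR.ne'
    have hzz : conj z = (R : ℂ) ^ 2 / z := by
      rw [eq_div_iff hz0, mul_comm, mul_conj', mem_sphere_zero_iff_norm.1 hz]
    have hsub : conj z - conj a = ((R : ℂ) ^ 2 - conj a * z) / z := by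
      rw [hzz]; field_simp
    simp only [map_mul, map_div₀, map_pow, map_sub, conj_conj]
    rw [hsub, hzz, div_pow]
    field_simp
    ring
  have hholo : DiffContOnCl ℂ
      (fun z ↦ (R : ℂ) ^ 2 * z ^ (n + 1) / ((R : ℂ) ^ 2 - conj a * z) ^ (n + 2) * f z)
      (ball 0 |R|) := by
    rw [abs_of_pos hR]
    refine DiffContOnCl.smul
      (c := fun z ↦ (R : ℂ) ^ 2 * z ^ (n + 1) / ((R : ℂ) ^ 2 - conj a * z) ^ (n + 2)) ?_ hf
    exact DifferentiableOn.diffContOnCl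
      (by fun_prop (disch := exact fun z hz ↦ pow_ne_zero _ (hden z hz)))
  rw [← map_eq_zero (starRingEnd ℂ), ← circleAverage_conj, circleAverage_congr_sphere hreflect,
    hholo.circleAverage]
  simp

theorem iteratedDeriv_succ_div_factorial_eq_circleAverage (hf : DiffContOnCl ℂ f (ball 0 R))
    (ha : a ∈ ball 0 R) (n : ℕ) :
    iteratedDeriv (n + 1) f a / (n + 1).factorial =
      Real.circleAverage (fun z ↦ z / (z - a) ^ (n + 2) * (2 * (f z).re : ℝ)) 0 R := by
  have hR : 0 < R := pos_of_mem_ball ha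
  have hK : ContinuousOn (fun z : ℂ ↦ z / (z - a) ^ (n + 2)) (sphere 0 |R|) := by
    simpa using continuousOn_sub_div_sub_pow_sphere ha (n + 2)
  have hfc := hf.continuousOn_sphere hR
  have hcauchy := hf.circleAverage_sub_div_sub_pow_smul ha (n + 1)
  simp only [sub_zero, smul_eq_mul] at hcauchy
  simp_rw [← add_conj, mul_add]
  rw [circleAverage_fun_add, hcauchy, circleAverage_div_sub_pow_mul_conj_eq_zero hf ha, add_zero]
  · ring
  · exact (hK.mul hfc).circleIntegrable'
  · exact (hK.mul (continuous_conj.comp_continuousOn hfc)).circleIntegrable'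

theorem norm_iteratedDeriv_succ_div_factorial_le (hf : DiffContOnCl ℂ f (ball 0 R))
    (ha : a ∈ ball 0 R) (hre : ∀ z ∈ sphere 0 R, 0 ≤ (f z).re) (n : ℕ) :
    ‖iteratedDeriv (n + 1) f a / (n + 1).factorial‖ ≤
      2 * R / ((R + ‖a‖) * (R - ‖a‖) ^ (n + 1)) * (f a).re := by
  have hR : 0 < R := pos_of_mem_ball ha
  have haR : ‖a‖ < R := mem_ball_zero_iff.1 ha
  set C := R / ((R ^ 2 - ‖a‖ ^ 2) * (R - ‖a‖) ^ n) with hC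
  have hK : ContinuousOn (fun z : ℂ ↦ z / (z - a) ^ (n + 2)) (sphere 0 |R|) := by
    simpa using continuousOn_sub_div_sub_pow_sphere ha (n + 2)
  have hre' : ContinuousOn (fun z ↦ (f z).re) (sphere 0 |R|) :=
    continuous_re.comp_continuousOn (hf.continuousOn_sphere hR)
  rw [hf.iteratedDeriv_succ_div_factorial_eq_circleAverage ha]
  calc _ ≤ Real.circleAverage (fun z ↦ ‖z / (z - a) ^ (n + 2) * (2 * (f z).re : ℝ)‖) 0 R :=
        norm_circleAverage_le _ _ _
    _ ≤ Real.circleAverage (fun z ↦ (2 * C) * (poissonKernel 0 a z * (f z).re)) 0 R := by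
        refine circleAverage_mono ?_ ?_ fun z hz ↦ ?_
        · exact (hK.mul (continuous_ofReal.comp_continuousOn
            (continuousOn_const.mul hre'))).norm.circleIntegrable'
        · exact (continuousOn_const.mul
            ((continuousOn_poissonKernel_sphere ha).mul hre')).circleIntegrable'
        rw [abs_of_pos hR] at hz
        have hrez := hre z hz
        rw [norm_mul, norm_real, Real.norm_of_nonneg (by positivity)]
        nlinarith [norm_div_sub_pow_le_mul_poissonKernel hz ha n]
    _ = 2 * C * (f a).re := by
        rw [← hf.circleAverage_poissonKernel_mul_re ha]
        exact circleAverage_fun_smul (a := 2 * C)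
    _ = _ := by
        have : R - ‖a‖ ≠ 0 := (sub_pos.2 haR).ne'
        have : R + ‖a‖ ≠ 0 := by positivity
        rw [hC, show R ^ 2 - ‖a‖ ^ 2 = (R + ‖a‖) * (R - ‖a‖) by ring]
        field_simp
        ring

end DiffContOnCl

theorem DifferentiableOn.norm_iteratedDeriv_succ_div_factorial_le {f : ℂ → ℂ} {a : ℂ} {R : ℝ}
    (hf : DifferentiableOn ℂ f (ball 0 R)) (ha : a ∈ ball 0 R)
    (hre : ∀ z ∈ ball 0 R, 0 ≤ (f z).re) (n : ℕ) :
    ‖iteratedDeriv (n + 1) f a / (n + 1).factorial‖ ≤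
      2 * R / ((R + ‖a‖) * (R - ‖a‖) ^ (n + 1)) * (f a).re := by
  have haR : ‖a‖ < R := mem_ball_zero_iff.1 ha
  have hbound : ContinuousAt (fun ρ ↦ 2 * ρ / ((ρ + ‖a‖) * (ρ - ‖a‖) ^ (n + 1)) * (f a).re) R := by
    have : R + ‖a‖ ≠ 0 := by linarith [norm_nonneg a]
    have : R - ‖a‖ ≠ 0 := by linarith
    fun_prop (disch := positivity)
  refine ge_of_tendsto (hbound.tendsto.mono_left nhdsWithin_le_nhds)
    (Filter.eventually_of_mem (Ioo_mem_nhdsLT haR) fun ρ ⟨haρ, hρR⟩ ↦ ?_)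
  have hsub : closedBall (0 : ℂ) ρ ⊆ ball 0 R := closedBall_subset_ball hρR
  exact (hf.diffContOnCl_ball hsub).norm_iteratedDeriv_succ_div_factorial_le
    (mem_ball_zero_iff.2 haρ) (fun z hz ↦ hre z (hsub (sphere_subset_closedBall hz))) n

theorem tsum_norm_mul_pow_succ_le {𝕜 : Type*} [NormedDivisionRing 𝕜] {c : ℕ → 𝕜} {M d : ℝ}
    {w : 𝕜} (hc : ∀ k, ‖c k‖ ≤ M / d ^ (k + 1)) (hwd : ‖w‖ < d) :
    ∑' k, ‖c k * w ^ (k + 1)‖ ≤ M * ‖w‖ / (d - ‖w‖) := by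
  have hd : 0 < d := (norm_nonneg w).trans_lt hwd
  set q := ‖w‖ / d
  have hq0 : 0 ≤ q := by positivity
  have hq1 : q < 1 := (div_lt_one hd).2 hwd
  have hterm : ∀ k, ‖c k * w ^ (k + 1)‖ ≤ M * q * q ^ k := fun k ↦ by
    rw [norm_mul, norm_pow, mul_assoc, ← pow_succ', div_pow]
    calc ‖c k‖ * ‖w‖ ^ (k + 1) ≤ M / d ^ (k + 1) * ‖w‖ ^ (k + 1) := by gcongr; exact hc k
      _ = M * (‖w‖ ^ (k + 1) / d ^ (k + 1)) := by ring
  have hgeom : Summable fun k ↦ M * q * q ^ k := (summable_geometric_of_lt_one hq0 hq1).mul_left _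
  calc ∑' k, ‖c k * w ^ (k + 1)‖ ≤ ∑' k, M * q * q ^ k :=
        (hgeom.of_nonneg_of_le (fun _ ↦ norm_nonneg _) hterm).tsum_le_tsum hterm hgeom
    _ = M * ‖w‖ / (d - ‖w‖) := by
        rw [tsum_mul_left, tsum_geometric_of_lt_one hq0 hq1]
        have : d - ‖w‖ ≠ 0 := (sub_pos.2 hwd).ne'
        simp only [q]
        field_simp

theorem stmt12_general (R r : ℝ) (f : ℂ → ℂ) (a : ℂ)
    (haR : a ∈ ball (0:ℂ) R)
    (hf : DifferentiableOn ℂ f (ball 0 R))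
    (hpos : ∀ w ∈ ball (0:ℂ) R, 0 < (f w).re)
    (d : ℝ) (hd : d = R - ‖a‖)
    (z : ℂ) (hz : ‖z - a‖ = r) (hrd : r < d) :
    (∑' k : ℕ, ‖(iteratedDeriv (k + 1) f a / (k + 1).factorial) * (z - a) ^ (k + 1)‖) ≤
      2 * R * r / ((2 * R - d) * (d - r)) * (f a).re := by
  subst hd hz
  have hcoeff (k : ℕ) : ‖iteratedDeriv (k + 1) f a / (k + 1).factorial‖ ≤
      2 * R / (R + ‖a‖) * (f a).re / (R - ‖a‖) ^ (k + 1) :=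
    (hf.norm_iteratedDeriv_succ_div_factorial_le haR (fun w hw ↦ (hpos w hw).le) k).trans_eq
      (by rw [div_mul_eq_mul_div, div_mul_eq_mul_div, div_div])
  refine (tsum_norm_mul_pow_succ_le hcoeff hrd).trans_eq ?_
  rw [show 2 * R - (R - ‖a‖) = R + ‖a‖ by ring, div_mul_eq_mul_div, div_mul_eq_mul_div,
    div_div]
  ring

theorem stmt12 (R r : ℝ) (f : ℂ → ℂ) (a : ℂ)
    (hR : 0 < R) (haR : a ∈ ball (0:ℂ) R)
    (hf : DifferentiableOn ℂ f (ball 0 R))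
    (hpos : ∀ w ∈ ball (0:ℂ) R, 0 < (f w).re)
    (d : ℝ) (hd : d = R - ‖a‖)
    (z : ℂ) (hz : ‖z - a‖ = r) (hrd : r < d) :
    (∑' k : ℕ, ‖(iteratedDeriv (k + 1) f a / (k + 1).factorial) * (z - a) ^ (k + 1)‖) ≤
      2 * R * r / ((2 * R - d) * (d - r)) * (f a).re :=
  stmt12_general R r f a haR hf hpos d hd z hz hrd
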